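/- arXiv:2312.16824 — 2 statements merged into one kernel-verified Lean document; each statement's English description precedes it below -/
import Mathlib

section
/- Let k ≥ 1 be an integer and let N ≥ 0 be any number of variables. In the polynomial ring ℤ[x_1,…,x_N], the elementary symmetric polynomial of degree 2k satisfies e_{2k} = Σ_{i=0}^{k} (−1)^i · m_{(2^i)} · h_{2k−2i}, where (2^i) denotes the partition with i parts all equal to 2. -/
open MvPolynomial Finset

/-- The rectangular partition `(a^i)` with `i` parts all equal to `a` (for `a ≥ 1`). -/
def rectPartition (a i : ℕ) : Nat.Partition (a * i) :=
  Nat.Partition.ofSums (a * i) (Multiset.replicate i a)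
    (by rw [Multiset.sum_replicate, smul_eq_mul, mul_comm])

/-!
Let `E(t) = ∏ⱼ (1 + xⱼ t)` and `H(t) = ∏ⱼ (1 - xⱼ t)⁻¹ = ∏ⱼ ∑ₙ xⱼⁿ tⁿ` be the generating series of
the `eₙ` and the `hₙ`. Then `E(t) = (E(t) E(-t)) H(t)`, and `E(t) E(-t) = ∏ⱼ (1 - xⱼ² t²)` has
no odd coefficients while its coefficient of `t^{2i}` is `(-1)^i` times the sum of the squarefree
monomials of degree `i` in the `xⱼ²`, which is `m_{(2^i)}`. Comparing coefficients of `t^{2k}`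
gives the identity.
-/

theorem Multiset.eq_nsmul_dedup_of_forall_count_eq {α : Type*} [DecidableEq α] {s : Multiset α}
    {a : ℕ} (h : ∀ x ∈ s, s.count x = a) : s = a • s.dedup := by
  ext x
  rw [Multiset.count_nsmul, Multiset.count_dedup]
  split_ifs with hx
  · rw [h x hx, mul_one]
  · rw [Multiset.count_eq_zero_of_notMem hx, mul_zero]

theorem Finset.sum_range_two_mul_add_one_of_odd_eq_zero {M : Type*} [AddCommMonoid M]
    (f : ℕ → M) (hf : ∀ i, f (2 * i + 1) = 0) (k : ℕ) :
    ∑ n ∈ range (2 * k + 1), f n = ∑ i ∈ range (k + 1), f (2 * i) := by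
  induction k with
  | zero => simp
  | succ k ih =>
    rw [show 2 * (k + 1) + 1 = 2 * k + 1 + 1 + 1 by ring, sum_range_succ, sum_range_succ, ih,
      hf, add_zero, sum_range_succ _ (k + 1), mul_add_one]

namespace Nat.Partition

theorem rectPartition_parts {a : ℕ} (ha : a ≠ 0) (i : ℕ) :
    (rectPartition a i).parts = Multiset.replicate i a := by
  simpa [rectPartition] using fun b hb => Multiset.eq_of_mem_replicate hb ▸ ha

theorem eq_rectPartition_iff {a i : ℕ} (ha : a ≠ 0) (μ : (a * i).Partition) :
    μ = rectPartition a i ↔ ∀ b ∈ μ.parts, b = a := by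
  refine ⟨?_, fun h => Nat.Partition.ext ?_⟩
  · rintro rfl b hb
    rw [rectPartition_parts ha] at hb
    exact Multiset.eq_of_mem_replicate hb
  · have hμ := Multiset.eq_replicate_card.2 h
    have hcard : Multiset.card μ.parts = i := by
      have hsum := μ.parts_sum
      rw [hμ, Multiset.sum_replicate, smul_eq_mul, mul_comm] at hsum
      exact Nat.eq_of_mul_eq_mul_left (Nat.pos_of_ne_zero ha) hsum
    rw [hμ, hcard, rectPartition_parts ha]

theorem ofSym_eq_rectPartition_iff {σ : Type*} [DecidableEq σ] {a i : ℕ} (ha : a ≠ 0)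
    (s : Sym σ (a * i)) :
    ofSym s = rectPartition a i ↔ ∀ x ∈ s, (s : Multiset σ).count x = a := by
  simp [eq_rectPartition_iff ha, ofSym]

end Nat.Partition

namespace PowerSeries

variable {ι A : Type*}

theorem coeff_prod_one_add_C_mul_X_pow [CommSemiring A] (s : Finset ι) (a : ι → A) (d n : ℕ) :
    coeff n (∏ j ∈ s, (1 + C (a j) * X ^ d)) =
      ∑ t ∈ s.powerset with d * #t = n, ∏ j ∈ t, a j := by
  simp_rw [prod_one_add, mul_comm (C _), prod_mul_distrib, prod_const, ← pow_mul, ← map_prod,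
    mul_comm (X ^ _), map_sum, coeff_C_mul_X_pow, sum_ite, sum_const_zero, add_zero, eq_comm]

theorem mk_pow_mul_one_sub_C_mul_X [CommRing A] (a : A) : mk (a ^ ·) * (1 - C a * X) = 1 := by
  simpa [rescale_mk, rescale_X] using congrArg (rescale a) (mk_one_mul_one_sub_eq_one (S := A))

end PowerSeries

namespace MvPolynomial

variable {σ R : Type*} [Fintype σ]

section CommSemiring

variable [CommSemiring R]

theorem esymm_eq_coeff_prod_one_add_C_mul_X (n : ℕ) :
    esymm σ R n = PowerSeries.coeff n (∏ j, (1 + PowerSeries.C (X j) * PowerSeries.X)) := by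
  rw [← pow_one PowerSeries.X, PowerSeries.coeff_prod_one_add_C_mul_X_pow, esymm,
    powersetCard_eq_filter]
  simp only [one_mul]

theorem prod_map_X_eq_prod_X_pow_count [DecidableEq σ] (s : Multiset σ) :
    (s.map X).prod = ∏ j, (X j : MvPolynomial σ R) ^ s.count j := by
  rw [prod_multiset_map_count]
  exact prod_subset (subset_univ _) fun j _ hj => by
    rw [Multiset.count_eq_zero_of_notMem (by simpa using hj), pow_zero]

theorem hsymm_eq_coeff_prod_mk_pow [DecidableEq σ] (n : ℕ) :
    hsymm σ R n = PowerSeries.coeff n (∏ j, PowerSeries.mk (X j ^ ·)) := by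
  simp only [PowerSeries.coeff_prod, PowerSeries.coeff_mk, hsymm]
  refine sum_bij' (fun s _ => Multiset.toFinsupp (s : Multiset σ))
    (fun f hf => ⟨Finsupp.toMultiset f, ?_⟩) (fun s _ => ?_) (fun _ _ => mem_univ _)
    (fun s _ => ?_) (fun f _ => ?_) (fun s _ => ?_)
  · simpa [Finsupp.card_toMultiset, Finsupp.sum_fintype] using hf
  · rw [mem_finsuppAntidiag]
    exact ⟨(Multiset.sum_count_eq_card fun a _ => mem_univ a).trans s.2, subset_univ _⟩
  · ext1; exact Multiset.toFinsupp_toMultiset _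
  · exact Finsupp.toMultiset_toFinsupp f
  · exact prod_map_X_eq_prod_X_pow_count _

theorem msymm_rectPartition [DecidableEq σ] {a : ℕ} (ha : a ≠ 0) (i : ℕ) :
    msymm σ R (rectPartition a i) = ∑ t ∈ powersetCard i univ, ∏ j ∈ t, X j ^ a := by
  have hcount (s : {s : Sym σ (a * i) // .ofSym s = rectPartition a i}) :
      ∀ x ∈ (s : Multiset σ), (s : Multiset σ).count x = a :=
    (Nat.Partition.ofSym_eq_rectPartition_iff ha _).1 s.2
  have hs (s : {s : Sym σ (a * i) // .ofSym s = rectPartition a i}) :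
      (s : Multiset σ) = a • (s : Multiset σ).dedup :=
    Multiset.eq_nsmul_dedup_of_forall_count_eq (hcount s)
  have hcard (t : Finset σ) (ht : t ∈ powersetCard i univ) :
      Multiset.card (a • t.val) = a * i := by
    rw [Multiset.card_nsmul, card_val, mem_powersetCard_univ.1 ht]
  refine sum_bij' (fun s _ => (s : Multiset σ).toFinset)
    (fun t ht => ⟨Sym.mk (a • t.val) (hcard t ht), ?_⟩) (fun s _ => ?_) (fun _ _ => mem_univ _)
    (fun s _ => ?_) (fun t _ => ?_) (fun s _ => ?_)
  · rw [Nat.Partition.ofSym_eq_rectPartition_iff ha]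
    intro x hx
    rw [Sym.coe_mk, Multiset.count_nsmul,
      Multiset.count_eq_one_of_mem t.nodup (Multiset.mem_of_mem_nsmul hx), mul_one]
  · rw [mem_powersetCard_univ, Multiset.card_toFinset]
    have hcard_s := congrArg Multiset.card (hs s)
    rw [Sym.card_coe, Multiset.card_nsmul] at hcard_s
    exact (Nat.eq_of_mul_eq_mul_left (Nat.pos_of_ne_zero ha) hcard_s).symm
  · exact Subtype.ext <| Sym.coe_injective (Multiset.toFinset_val (s : Multiset σ) ▸ hs s).symm
  · rw [Sym.coe_mk, Multiset.toFinset_nsmul _ _ ha, val_toFinset]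
  · rw [prod_multiset_map_count]
    exact prod_congr rfl fun j hj => congrArg _ (hcount s j (Multiset.mem_toFinset.1 hj))

end CommSemiring

section CommRing

variable [CommRing R]

theorem coeff_two_mul_prod_one_sub_C_X_sq_mul_X_sq [DecidableEq σ] (i : ℕ) :
    PowerSeries.coeff (2 * i) (∏ j, (1 - PowerSeries.C (X j ^ 2) * PowerSeries.X ^ 2)) =
      (-1) ^ i * msymm σ R (rectPartition 2 i) := by
  simp_rw [sub_eq_add_neg, ← neg_mul, ← map_neg, PowerSeries.coeff_prod_one_add_C_mul_X_pow,
    Nat.mul_left_cancel_iff two_pos, ← powersetCard_eq_filter, prod_neg,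
    msymm_rectPartition two_ne_zero, mul_sum]
  exact sum_congr rfl fun t ht => by rw [mem_powersetCard_univ.1 ht]

theorem coeff_two_mul_add_one_prod_one_sub_C_X_sq_mul_X_sq (i : ℕ) :
    PowerSeries.coeff (2 * i + 1) (∏ j, (1 - PowerSeries.C (X j ^ 2) * PowerSeries.X ^ 2)) =
      (0 : MvPolynomial σ R) := by
  simp_rw [sub_eq_add_neg, ← neg_mul, ← map_neg, PowerSeries.coeff_prod_one_add_C_mul_X_pow]
  exact sum_eq_zero fun t ht => absurd (mem_filter.1 ht).2 (by omega)

theorem esymm_eq_sum_coeff_prod_one_sub_C_X_sq_mul_X_sq_mul_hsymm [DecidableEq σ] (n : ℕ) :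
    esymm σ R n = ∑ m ∈ range (n + 1),
      PowerSeries.coeff m (∏ j, (1 - PowerSeries.C (X j ^ 2) * PowerSeries.X ^ 2)) *
        hsymm σ R (n - m) := by
  have hinv : (∏ j : σ, (1 - PowerSeries.C (X j : MvPolynomial σ R) * PowerSeries.X)) *
      ∏ j, PowerSeries.mk (X j ^ ·) = 1 := by
    rw [← prod_mul_distrib]
    exact prod_eq_one fun j _ => by rw [mul_comm, PowerSeries.mk_pow_mul_one_sub_C_mul_X]
  have hsq : (∏ j : σ, (1 + PowerSeries.C (X j : MvPolynomial σ R) * PowerSeries.X)) *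
      ∏ j, (1 - PowerSeries.C (X j) * PowerSeries.X) =
        ∏ j, (1 - PowerSeries.C (X j ^ 2) * PowerSeries.X ^ 2) := by
    rw [← prod_mul_distrib]
    exact prod_congr rfl fun j _ => by rw [map_pow]; ring
  calc esymm σ R n
      = PowerSeries.coeff n ((∏ j : σ, (1 + PowerSeries.C (X j) * PowerSeries.X)) *
          ((∏ j, (1 - PowerSeries.C (X j) * PowerSeries.X)) * ∏ j, PowerSeries.mk (X j ^ ·))) := by
        rw [hinv, mul_one, esymm_eq_coeff_prod_one_add_C_mul_X]
    _ = _ := by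
      rw [← mul_assoc, hsq, PowerSeries.coeff_mul, Nat.sum_antidiagonal_eq_sum_range_succ_mk]
      simp only [hsymm_eq_coeff_prod_mk_pow]

end CommRing

end MvPolynomial

theorem esymm_eq_alternating_sum_msymm_hsymm_general (k N : ℕ) :
    esymm (Fin N) ℤ (2 * k) =
      ∑ i ∈ Finset.range (k + 1),
        (-1 : MvPolynomial (Fin N) ℤ) ^ i * msymm (Fin N) ℤ (rectPartition 2 i) *
          hsymm (Fin N) ℤ (2 * k - 2 * i) := by
  rw [esymm_eq_sum_coeff_prod_one_sub_C_X_sq_mul_X_sq_mul_hsymm,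
    sum_range_two_mul_add_one_of_odd_eq_zero _ fun i => by
      rw [coeff_two_mul_add_one_prod_one_sub_C_X_sq_mul_X_sq, zero_mul]]
  simp only [coeff_two_mul_prod_one_sub_C_X_sq_mul_X_sq]

/-- `e_{2k} = ∑_{i = 0}^{k} (-1)^i ⬝ m_{(2^i)} ⬝ h_{2k - 2i}`. -/
theorem esymm_eq_alternating_sum_msymm_hsymm (k N : ℕ) (hk : 1 ≤ k) :
    esymm (Fin N) ℤ (2 * k) =
      ∑ i ∈ Finset.range (k + 1),
        (-1 : MvPolynomial (Fin N) ℤ) ^ i * msymm (Fin N) ℤ (rectPartition 2 i) *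
          hsymm (Fin N) ℤ (2 * k - 2 * i) :=
  esymm_eq_alternating_sum_msymm_hsymm_general k N
end

section
/- Let u ≥ 0, l ≥ 0, k ≥ 1 and v ≥ 1 be integers. In the polynomial ring ℤ[X,Y,Z], the coefficient of the monomial X^l · Y^{k−1} · Z^{2k+l−2} in the polynomial (1 + XZ)^u · (1 + XZ + YZ^2)^{v−1} equals binom(v−1, k−1) · binom(u+v−k, l) when v ≥ k, and equals 0 when v < k. -/
/-!
Write `s = X Z` and `t = Y Z²`. The polynomial is `P(s, t)` with
`P = (1 + s)^u (t + (1 + s))^(v-1)`, and since `(a, b) ↦ X^b Y^a Z^(2a+b)` is injective on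
exponents, the required coefficient is the coefficient of `s^l t^(k-1)` in `P`. Viewing `P` as a
polynomial in `t` over `ℤ[s]`, the binomial theorem gives `C(v-1, k-1) (1 + s)^(u+v-k)` as the
coefficient of `t^(k-1)`, and its coefficient of `s^l` is `C(v-1, k-1) C(u+v-k, l)`.
-/

open MvPolynomial

namespace MvPolynomial

section MonomialMap

variable {σ τ R : Type*} [CommSemiring R]

noncomputable def monomialMap (E : (σ →₀ ℕ) →+ (τ →₀ ℕ)) :
    MvPolynomial σ R →ₐ[R] MvPolynomial τ R :=
  AddMonoidAlgebra.mapDomainAlgHom R R E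

theorem monomialMap_monomial (E : (σ →₀ ℕ) →+ (τ →₀ ℕ)) (d : σ →₀ ℕ) (r : R) :
    monomialMap E (monomial d r) = monomial (E d) r := by
  simp [MvPolynomial, monomialMap, monomial]

theorem monomialMap_X (E : (σ →₀ ℕ) →+ (τ →₀ ℕ)) (i : σ) :
    monomialMap (R := R) E (X i) = monomial (E (Finsupp.single i 1)) 1 :=
  monomialMap_monomial E _ _

theorem coeff_monomialMap {E : (σ →₀ ℕ) →+ (τ →₀ ℕ)} (hE : Function.Injective E)
    (p : MvPolynomial σ R) (d : σ →₀ ℕ) : coeff (E d) (monomialMap E p) = coeff d p := by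
  classical
  induction p using induction_on' with
  | monomial e r => simp only [monomialMap_monomial, coeff_monomial, hE.eq_iff]
  | add p q hp hq => simp only [map_add, coeff_add, hp, hq]

end MonomialMap

variable {R : Type*} [CommSemiring R]

theorem coeff_single_one_add_X_pow {σ : Type*} [Unique σ] (n a : ℕ) :
    coeff (Finsupp.single default a) ((1 + X default : MvPolynomial σ R) ^ n) = n.choose a := by
  rw [← coeff_uniqueAlgEquiv]
  simp [Polynomial.coeff_one_add_X_pow]

theorem coeff_one_add_X_one_pow_mul_X_zero_add_one_add_X_one_pow (u n a b : ℕ) :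
    coeff (Finsupp.single 0 b + Finsupp.single 1 a)
        ((1 + X 1) ^ u * (X 0 + (1 + X 1)) ^ n : MvPolynomial (Fin 2) R) =
      n.choose b * (u + (n - b)).choose a := by
  have hfin : finSuccEquiv R 1 ((1 + X 1) ^ u * (X 0 + (1 + X 1)) ^ n) =
      Polynomial.C ((1 + X 0) ^ u) * (Polynomial.X + Polynomial.C (1 + X 0)) ^ n := by
    have hX1 : finSuccEquiv R 1 (X 1) = Polynomial.C (X 0) := finSuccEquiv_X_succ (j := 0)
    simp only [map_mul, map_pow, map_add, map_one, finSuccEquiv_X_zero, hX1]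
  have hexp : Finsupp.single 0 b + Finsupp.single 1 a =
      Finsupp.cons b (Finsupp.single (0 : Fin 1) a) := by
    ext i
    cases i using Fin.cases with
    | zero => simp
    | succ j => rw [Finsupp.cons_succ, Fin.fin_one_eq_zero j]; simp
  rw [hexp, ← finSuccEquiv_coeff_coeff, hfin, Polynomial.coeff_C_mul,
    Polynomial.coeff_X_add_C_pow, ← mul_assoc, ← pow_add, mul_comm, ← C_eq_coe_nat, coeff_C_mul]
  exact congrArg _ (coeff_single_one_add_X_pow _ _)

end MvPolynomial

noncomputable def substExponent : (Fin 2 →₀ ℕ) →+ (Fin 3 →₀ ℕ) where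
  toFun d := Finsupp.single 0 (d 1) + Finsupp.single 1 (d 0) + Finsupp.single 2 (2 * d 0 + d 1)
  map_zero' := by simp
  map_add' d e := by
    simp only [Finsupp.add_apply, mul_add, Finsupp.single_add]
    abel

@[simp] theorem substExponent_apply_zero (d : Fin 2 →₀ ℕ) : substExponent d 0 = d 1 := by
  simp [substExponent]

@[simp] theorem substExponent_apply_one (d : Fin 2 →₀ ℕ) : substExponent d 1 = d 0 := by
  simp [substExponent]

@[simp] theorem substExponent_apply_two (d : Fin 2 →₀ ℕ) :
    substExponent d 2 = 2 * d 0 + d 1 := by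
  simp [substExponent]

theorem substExponent_injective : Function.Injective substExponent := by
  intro d e h
  have h0 : d 0 = e 0 := by simpa using DFunLike.congr_fun h 1
  have h1 : d 1 = e 1 := by simpa using DFunLike.congr_fun h 0
  ext i
  fin_cases i
  exacts [h0, h1]

section SubstExponent

variable {R : Type*} [CommSemiring R]

theorem monomialMap_substExponent_X_zero :
    monomialMap (R := R) substExponent (X 0) = X 1 * X 2 ^ 2 := by
  have h : substExponent (Finsupp.single 0 1) = Finsupp.single 1 1 + Finsupp.single 2 2 := by
    ext i; fin_cases i <;> simp
  rw [monomialMap_X, h, monomial_add_single]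
  rfl

theorem monomialMap_substExponent_X_one :
    monomialMap (R := R) substExponent (X 1) = X 0 * X 2 := by
  have h : substExponent (Finsupp.single 1 1) = Finsupp.single 0 1 + Finsupp.single 2 1 := by
    ext i; fin_cases i <;> simp
  rw [monomialMap_X, h, monomial_add_single, pow_one]
  rfl

end SubstExponent

/-- The coefficient of `X^l Y^(k-1) Z^(2k+l-2)` in `(1 + XZ)^u (1 + XZ + YZ^2)^(v-1)`
is `C(v-1, k-1) ⬝ C(u+v-k, l)` if `v ≥ k`, and `0` if `v < k`.
Here variable `0` plays the role of `X`, variable `1` of `Y`, and variable `2` of `Z`. -/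
theorem coeff_key_computation (u l k v : ℕ) (hk : 1 ≤ k) (hv : 1 ≤ v) :
    MvPolynomial.coeff
        (Finsupp.single (0 : Fin 3) l + Finsupp.single (1 : Fin 3) (k - 1) +
          Finsupp.single (2 : Fin 3) (2 * k + l - 2))
        ((1 + X 0 * X 2) ^ u * (1 + X 0 * X 2 + X 1 * X 2 ^ 2) ^ (v - 1) :
          MvPolynomial (Fin 3) ℤ) =
      if k ≤ v then ((v - 1).choose (k - 1) * (u + v - k).choose l : ℤ) else 0 := by
  have hpoly : ((1 + X 0 * X 2) ^ u * (1 + X 0 * X 2 + X 1 * X 2 ^ 2) ^ (v - 1) :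
      MvPolynomial (Fin 3) ℤ) =
        monomialMap substExponent ((1 + X 1) ^ u * (X 0 + (1 + X 1)) ^ (v - 1)) := by
    simp only [map_mul, map_pow, map_add, map_one, monomialMap_substExponent_X_zero,
      monomialMap_substExponent_X_one]
    ring
  have hexp : Finsupp.single (0 : Fin 3) l + Finsupp.single (1 : Fin 3) (k - 1) +
      Finsupp.single (2 : Fin 3) (2 * k + l - 2) =
        substExponent (Finsupp.single 0 (k - 1) + Finsupp.single 1 l) := by
    rw [show 2 * k + l - 2 = 2 * (k - 1) + l by omega]
    ext i
    fin_cases i <;> simp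
  rw [hpoly, hexp, coeff_monomialMap substExponent_injective,
    coeff_one_add_X_one_pow_mul_X_zero_add_one_add_X_one_pow]
  split_ifs with hkv
  · rw [show u + (v - 1 - (k - 1)) = u + v - k by omega]
  · rw [Nat.choose_eq_zero_of_lt (by omega), Nat.cast_zero, zero_mul]
end
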